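/- In the regime switching model, for all n ≥ 1 and all 0 ≤ r ≤ n, P{𝓛_n = r} = E[ C(L_n, r) Σ_{k=1}^∞ p_{X_{n+1},k}^{1+r} (1 − p_{X_{n+1},k})^{L_n − r} ], where C(L_n, r) is the binomial coefficient (taken to be 0 when L_n < r), 𝓛_n = Σ_{i=1}^n 1{Z_i = Z_{n+1}}, and L_n = Σ_{i=1}^n 1{X_i = X_{n+1}}. -/

import Mathlib

/-!
Given the regimes `X_0, …, X_n`, the labels `K_0, …, K_n` are independent with laws
`P_{X_i}`. Given moreover `K_n = m`, the count `𝓛_n` is the number of successes among the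
`L_n` indices `i < n` with `X_i = X_n`, each succeeding (`K_i = m`) with probability
`p_{X_n,m}`; so it is binomial, and averaging over `m` with weights `p_{X_n,m}` gives the formula.

`Z` is not assumed measurable, so both sides are computed as sums over the countably many
histories `(Z_0, …, Z_n)`. Their cylinder probabilities add up to `1` (the `R`-factors
telescope), which forces every cylinder to be null-measurable.
-/

open MeasureTheory ENNReal Finset

theorem ENNReal.tsum_pi_prod_eq_prod_tsum {β : Type*} :
    ∀ {N : ℕ} (g : Fin N → β → ℝ≥0∞),
      ∑' k : Fin N → β, ∏ i, g i (k i) = ∏ i, ∑' x, g i x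
  | 0, g => by simp
  | N + 1, g => by
    rw [← (Fin.consEquiv fun _ => β).tsum_eq, ENNReal.tsum_prod']
    simp [Fin.prod_univ_succ, ENNReal.tsum_mul_left, ENNReal.tsum_mul_right,
      ENNReal.tsum_pi_prod_eq_prod_tsum]

theorem ENNReal.tsum_fun_prod_eq_tsum_tsum {ι α β : Type*} (F : (ι → α × β) → ℝ≥0∞) :
    ∑' c, F c = ∑' (a : ι → α) (k : ι → β), F fun i => (a i, k i) := by
  rw [← (Equiv.arrowProdEquivProdArrow ι (fun _ => α) (fun _ => β)).symm.tsum_eq,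
    ENNReal.tsum_prod']
  rfl

theorem ENNReal.tsum_ite_ne_eq_one_sub {β : Type*} [DecidableEq β] {q : β → ℝ≥0∞}
    (hq : ∑' x, q x = 1) (m : β) : ∑' x, (if x = m then 0 else q x) = 1 - q m := by
  refine ENNReal.eq_sub_of_add_eq ?_ ?_
  · exact ne_top_of_le_ne_top one_ne_top (hq ▸ ENNReal.le_tsum m)
  · rw [add_comm, ← hq]
    convert (ENNReal.tsum_eq_add_tsum_ite m).symm

theorem tsum_ite_filter_eq_eq_pow_mul_pow {β : Type*} [DecidableEq β] {N : ℕ}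
    {f : Fin N → β → ℝ≥0∞} (hf : ∀ i, ∑' x, f i x = 1) {M W : Finset (Fin N)}
    (hWM : W ⊆ M)
    {q : β → ℝ≥0∞} (hfM : ∀ i ∈ M, f i = q) (m : β) :
    ∑' k : Fin N → β, (if {i ∈ M | k i = m} = W then ∏ i, f i (k i) else 0) =
      q m ^ #W * (1 - q m) ^ (#M - #W) := by
  -- the event `{i ∈ M | k i = m} = W` is a product of one-coordinate events
  have hind : ∀ k : Fin N → β,
      (if {i ∈ M | k i = m} = W then ∏ i, f i (k i) else 0) =
      ∏ i, if i ∈ M → (k i = m ↔ i ∈ W) then f i (k i) else 0 := by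
    intro k
    have hiff : {i ∈ M | k i = m} = W ↔ ∀ i ∈ univ, i ∈ M → (k i = m ↔ i ∈ W) := by
      simp only [Finset.ext_iff, mem_filter, mem_univ, true_implies]
      refine ⟨fun h i hi => by simpa [hi] using h i, fun h i => ?_⟩
      by_cases hi : i ∈ M
      · simp [hi, h i hi]
      · simpa [hi] using fun hW => hi (hWM hW)
    rw [prod_ite_zero]
    simp only [hiff]
    congr
  have hfactor : ∀ i, ∑' x, (if i ∈ M → (x = m ↔ i ∈ W) then f i x else 0) =
      (if i ∈ W then q m else 1) * (if i ∈ M \ W then 1 - q m else 1) := by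
    intro i
    by_cases hiW : i ∈ W
    · simp [hiW, hWM hiW, hfM i (hWM hiW)]
    by_cases hiM : i ∈ M
    · simp [hiW, hiM, hfM i hiM, ENNReal.tsum_ite_ne_eq_one_sub (hfM i hiM ▸ hf i)]
    · simp [hiW, hiM, hf i]
  rw [tsum_congr hind,
    ENNReal.tsum_pi_prod_eq_prod_tsum fun i x => if i ∈ M → (x = m ↔ i ∈ W) then f i x else 0,
    prod_congr rfl fun i _ => hfactor i,
    prod_mul_distrib, prod_ite_mem, prod_ite_mem, univ_inter, univ_inter, prod_const,
    prod_const, card_sdiff_of_subset hWM]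

theorem tsum_ite_card_filter_eq_choose_mul {β : Type*} [DecidableEq β] {N : ℕ}
    {f : Fin N → β → ℝ≥0∞} (hf : ∀ i, ∑' x, f i x = 1) {M : Finset (Fin N)}
    {q : β → ℝ≥0∞} (hfM : ∀ i ∈ M, f i = q) (m : β) (r : ℕ) :
    ∑' k : Fin N → β, (if #{i ∈ M | k i = m} = r then ∏ i, f i (k i) else 0) =
      ((#M).choose r : ℝ≥0∞) * (q m ^ r * (1 - q m) ^ (#M - r)) := by
  have hsplit : ∀ k : Fin N → β,
      (if #{i ∈ M | k i = m} = r then ∏ i, f i (k i) else 0) =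
      ∑ W ∈ M.powersetCard r, if {i ∈ M | k i = m} = W then ∏ i, f i (k i) else 0 := by
    intro k
    simp [mem_powersetCard, filter_subset]
  rw [tsum_congr hsplit, Summable.tsum_finsetSum fun _ _ => ENNReal.summable,
    sum_congr rfl fun W hW => ?_, sum_const, card_powersetCard, nsmul_eq_mul]
  obtain ⟨hWM, rfl⟩ := mem_powersetCard.1 hW
  exact tsum_ite_filter_eq_eq_pow_mul_pow hf hWM hfM m

/-- `occupancy (Z_0, …, Z_n)` is `𝓛_n` and `occupancy (X_0, …, X_n)` is `L_n`. -/
def occupancy {α : Type*} [DecidableEq α] {N : ℕ} (c : Fin (N + 1) → α) : ℕ :=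
  #{i : Fin N | c i.castSucc = c (Fin.last N)}

noncomputable def mixedBinomial {β : Type*} (q : β → ℝ≥0∞) (L r : ℕ) : ℝ≥0∞ :=
  L.choose r * ∑' m, q m ^ (r + 1) * (1 - q m) ^ (L - r)

theorem occupancy_eq_sum_range {α : Type*} [DecidableEq α] (c : ℕ → α) (n : ℕ) :
    occupancy (fun i : Fin (n + 1) => c i) = ∑ i ∈ range n, if c i = c n then 1 else 0 := by
  rw [occupancy, card_filter, ← Fin.sum_univ_eq_sum_range]
  simp

theorem tsum_ite_occupancy_eq_mixedBinomial {α β : Type*} [DecidableEq α] [DecidableEq β]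
    {p : α → β → ℝ≥0∞} (hp : ∀ a, ∑' x, p a x = 1) {N : ℕ} (a : Fin (N + 1) → α) (r : ℕ) :
    ∑' k : Fin (N + 1) → β,
        (if occupancy (fun i => (a i, k i)) = r then ∏ i, p (a i) (k i) else 0) =
      mixedBinomial (p (a (Fin.last N))) (occupancy a) r := by
  set M : Finset (Fin N) := {i | a i.castSucc = a (Fin.last N)}
  have hocc : ∀ m (k : Fin N → β),
      occupancy (fun i => (a i, Fin.snoc (α := fun _ => β) k m i)) = #{i ∈ M | k i = m} := by
    intro m k
    simp [occupancy, M, filter_filter, Prod.ext_iff]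
  have hprod : ∀ m (k : Fin N → β), ∏ i, p (a i) (Fin.snoc (α := fun _ => β) k m i) =
      (∏ i : Fin N, p (a i.castSucc) (k i)) * p (a (Fin.last N)) m := by
    intro m k
    simp [Fin.prod_univ_castSucc]
  rw [← (Fin.snocEquiv fun _ => β).tsum_eq, ENNReal.tsum_prod']
  simp only [Fin.snocEquiv_apply, hocc, hprod, ← ite_zero_mul, ENNReal.tsum_mul_right]
  have hfM : ∀ i ∈ M, p (a i.castSucc) = p (a (Fin.last N)) := fun i hi => by
    rw [(mem_filter.1 hi).2]
  simp only [tsum_ite_card_filter_eq_choose_mul (fun i => hp _) hfM, mixedBinomial,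
    show occupancy a = #M from rfl, ← ENNReal.tsum_mul_left]
  exact tsum_congr fun m => by ring

theorem tsum_mul_prod_eq_tsum {α β : Type*} {p : α → β → ℝ≥0∞} (hp : ∀ a, ∑' x, p a x = 1)
    {N : ℕ} (w : (Fin N → α) → ℝ≥0∞) :
    ∑' c : Fin N → α × β, w (fun i => (c i).1) * ∏ i, p (c i).1 (c i).2 = ∑' a, w a := by
  simp [ENNReal.tsum_fun_prod_eq_tsum_tsum, ENNReal.tsum_mul_left,
    ENNReal.tsum_pi_prod_eq_prod_tsum fun i => p _, hp]

theorem tsum_indicator_occupancy_eq_tsum_mixedBinomial_mul {α β : Type*} [DecidableEq α]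
    [DecidableEq β] {p : α → β → ℝ≥0∞} (hp : ∀ a, ∑' x, p a x = 1) {N : ℕ}
    (w : (Fin (N + 1) → α) → ℝ≥0∞) (r : ℕ) :
    ∑' c : Fin (N + 1) → α × β, {c | occupancy c = r}.indicator
        (fun c => w (fun i => (c i).1) * ∏ i, p (c i).1 (c i).2) c =
      ∑' c : Fin (N + 1) → α × β, mixedBinomial (p (c (Fin.last N)).1)
        (occupancy fun i => (c i).1) r * (w (fun i => (c i).1) * ∏ i, p (c i).1 (c i).2) := by
  rw [ENNReal.tsum_fun_prod_eq_tsum_tsum, ENNReal.tsum_fun_prod_eq_tsum_tsum]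
  congr with a
  simp only [Set.indicator_apply, Set.mem_ofPred_eq, ← mul_ite_zero, ENNReal.tsum_mul_left,
    tsum_ite_occupancy_eq_mixedBinomial hp, ENNReal.tsum_pi_prod_eq_prod_tsum fun i => p (a i),
    hp, prod_const_one, mul_one]
  exact mul_comm _ _

section Fibers

variable {Ω ι : Type*} [MeasurableSpace Ω] {P : Measure Ω}

theorem nullMeasurableSet_of_measure_add_measure_compl_le [IsFiniteMeasure P] {s : Set Ω}
    (h : P s + P sᶜ ≤ P Set.univ) : NullMeasurableSet s P := by
  set T := toMeasurable P s
  have hsT : s ⊆ T := subset_toMeasurable P s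
  have hcompl : P sᶜ ≤ P Set.univ - P s :=
    ENNReal.le_sub_of_add_le_left (measure_ne_top P s) h
  have hTc : P Tᶜ = P Set.univ - P s := by
    rw [measure_compl (measurableSet_toMeasurable P s) (measure_ne_top P _),
      measure_toMeasurable]
  have hnull : P (sᶜ ∩ T) = 0 := by
    have hsplit := measure_inter_add_sdiff sᶜ (measurableSet_toMeasurable P s) (μ := P)
    rw [Set.sdiff_eq_compl_inter, Set.inter_eq_left.2 (Set.compl_subset_compl.2 hsT), hTc]
      at hsplit
    have hfin : P Set.univ - P s ≠ ∞ := ENNReal.sub_ne_top (measure_ne_top P _)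
    refine le_zero_iff.1 ((ENNReal.add_le_add_iff_right hfin).1 ?_)
    rw [zero_add, hsplit]
    exact hcompl
  refine (measurableSet_toMeasurable P s).nullMeasurableSet.congr (ae_eq_set.2 ⟨?_, ?_⟩)
  · rwa [Set.sdiff_eq, Set.inter_comm]
  · rw [Set.sdiff_eq_empty.2 hsT, measure_empty]

variable [IsFiniteMeasure P] [Countable ι] {f : Ω → ι}

theorem nullMeasurableSet_preimage_singleton_of_tsum
    (hf : ∑' c, P (f ⁻¹' {c}) = P Set.univ) (c : ι) : NullMeasurableSet (f ⁻¹' {c}) P := by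
  classical
  refine nullMeasurableSet_of_measure_add_measure_compl_le ?_
  rw [← hf, ENNReal.tsum_eq_add_tsum_ite c]
  gcongr
  calc P (f ⁻¹' {c})ᶜ ≤ P (⋃ c', if c' = c then ∅ else f ⁻¹' {c'}) := by
        refine measure_mono fun ω hω => Set.mem_iUnion.2 ⟨f ω, ?_⟩
        simpa [eq_comm] using hω
    _ ≤ ∑' c', P (if c' = c then ∅ else f ⁻¹' {c'}) := measure_iUnion_le _
    _ = ∑' c', if c' = c then 0 else P (f ⁻¹' {c'}) := by
        congr with c'
        split_ifs <;> simp

theorem measure_preimage_eq_tsum_indicator (hf : ∑' c, P (f ⁻¹' {c}) = P Set.univ)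
    (s : Set ι) : P (f ⁻¹' s) = ∑' c, s.indicator (fun c => P (f ⁻¹' {c})) c := by
  rw [← Set.biUnion_preimage_singleton, measure_biUnion₀ s.to_countable
    (fun _ ha _ hb hab => (Set.pairwiseDisjoint_fiber f s ha hb hab).aedisjoint)
    fun c _ => nullMeasurableSet_preimage_singleton_of_tsum hf c,
    _root_.tsum_subtype s fun c => P (f ⁻¹' {c})]

theorem lintegral_comp_eq_tsum (hf : ∑' c, P (f ⁻¹' {c}) = P Set.univ) (g : ι → ℝ≥0∞) :
    ∫⁻ ω, g (f ω) ∂P = ∑' c, g c * P (f ⁻¹' {c}) := by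
  have hg : ∀ ω, g (f ω) = ∑' c, (f ⁻¹' {c}).indicator (fun _ => g c) ω := by
    intro ω
    rw [tsum_eq_single (f ω) fun c hc =>
      Set.indicator_of_notMem (s := f ⁻¹' {c}) (fun h => hc (Eq.symm h)) _]
    simp
  simp_rw [hg]
  rw [lintegral_tsum fun c => aemeasurable_const.indicator₀
    (nullMeasurableSet_preimage_singleton_of_tsum hf c)]
  congr with c
  rw [lintegral_indicator₀ (nullMeasurableSet_preimage_singleton_of_tsum hf c),
    setLIntegral_const]

end Fibers

/-- `R i` reads only the entries before `i`, so the way a finite history is extended to a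
sequence is immaterial. -/
def extendLast {α : Type*} {N : ℕ} (c : Fin (N + 1) → α) (i : ℕ) : α :=
  c ⟨min i N, Nat.lt_succ_of_le (min_le_right i N)⟩

theorem extendLast_of_lt {α : Type*} {N : ℕ} (c : Fin (N + 1) → α) {i : ℕ}
    (hi : i < N + 1) : extendLast c i = c ⟨i, hi⟩ := by
  simp [extendLast, Nat.min_eq_left (Nat.le_of_lt_succ hi)]

theorem extendLast_snoc_of_le {α : Type*} {N : ℕ} (c : Fin (N + 1) → α) (b : α) {i : ℕ}
    (hi : i ≤ N) : extendLast (Fin.snoc c b : Fin (N + 2) → α) i = extendLast c i := by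
  rw [extendLast_of_lt _ (by omega), extendLast_of_lt _ (by omega)]
  exact Fin.snoc_castSucc (α := fun _ => α) (i := ⟨i, _⟩) ..

theorem extendLast_val {α : Type*} {N : ℕ} (c : Fin (N + 1) → α) (i : Fin (N + 1)) :
    extendLast c i = c i :=
  extendLast_of_lt c i.is_lt

noncomputable def pathWeight {α : Type*} (R : ℕ → (ℕ → α) → α → ℝ≥0∞) {N : ℕ}
    (a : Fin (N + 1) → α) : ℝ≥0∞ :=
  ∏ i : Fin (N + 1), R i (extendLast a) (a i)

theorem tsum_pathWeight_eq_one {α : Type*} [Nonempty α] {R : ℕ → (ℕ → α) → α → ℝ≥0∞}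
    (hRdep : ∀ (n : ℕ) (a a' : ℕ → α), (∀ i < n, a i = a' i) → R n a = R n a')
    (hRsum : ∀ (n : ℕ) (a : ℕ → α), ∑' b, R n a b = 1) :
    ∀ N, ∑' a : Fin (N + 1) → α, pathWeight R a = 1
  | 0 => by
    have hR0 : ∀ a : Fin 1 → α, R 0 (extendLast a) = R 0 fun _ => Classical.arbitrary α :=
      fun a => hRdep 0 _ _ fun i hi => absurd hi (Nat.not_lt_zero i)
    rw [← (Equiv.funUnique (Fin 1) α).symm.tsum_eq]
    simp [pathWeight, hR0, hRsum]
  | N + 1 => by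
    have hstep : ∀ (a : Fin (N + 1) → α) b,
        pathWeight R (Fin.snoc a b : Fin (N + 2) → α) =
          pathWeight R a * R (N + 1) (extendLast a) b := by
      intro a b
      have hR : ∀ i ≤ N + 1, R i (extendLast (Fin.snoc a b : Fin (N + 2) → α)) =
          R i (extendLast a) :=
        fun i hi => hRdep i _ _ fun j hj => extendLast_snoc_of_le a b (by omega)
      simp [pathWeight, Fin.prod_univ_castSucc, hR _ (Nat.le_succ_of_le (Fin.is_le _)),
        hR (N + 1) le_rfl]
    rw [← (Fin.snocEquiv fun _ => α).tsum_eq, ENNReal.tsum_prod', ENNReal.tsum_comm]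
    refine (tsum_congr fun a => tsum_congr fun b => hstep a b).trans ?_
    simp [ENNReal.tsum_mul_left, hRsum, tsum_pathWeight_eq_one hRdep hRsum N]

theorem measure_preimage_history_eq {Ω α β : Type*} [MeasurableSpace Ω] {P : Measure Ω}
    {Z : ℕ → Ω → α × β} {p : α → β → ℝ≥0∞} {R : ℕ → (ℕ → α) → α → ℝ≥0∞}
    (hZ : ∀ (n : ℕ) (a : ℕ → α) (k : ℕ → β),
      P (⋂ i ∈ range (n + 1), {ω | Z i ω = (a i, k i)}) =
        (∏ i ∈ range (n + 1), R i a (a i)) * ∏ i ∈ range (n + 1), p (a i) (k i))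
    (n : ℕ) (c : Fin (n + 1) → α × β) :
    P ((fun ω (i : Fin (n + 1)) => Z i ω) ⁻¹' {c}) =
      pathWeight R (fun i => (c i).1) * ∏ i, p (c i).1 (c i).2 := by
  have hcyl : (fun ω (i : Fin (n + 1)) => Z i ω) ⁻¹' {c} =
      ⋂ i ∈ range (n + 1), {ω | Z i ω = ((extendLast c i).1, (extendLast c i).2)} := by
    ext ω
    simp only [Set.mem_preimage, Set.mem_singleton_iff, funext_iff, Fin.forall_iff,
      Set.mem_iInter, mem_range, Set.mem_ofPred_eq]
    exact forall₂_congr fun i hi => by rw [extendLast_of_lt c hi]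
  rw [hcyl, hZ, pathWeight, ← Fin.prod_univ_eq_prod_range, ← Fin.prod_univ_eq_prod_range]
  simp only [extendLast_val]
  rfl

theorem regime_switching_occupancy_repr_general {A : Type*} [Countable A] [DecidableEq A]
    {Ω : Type*} [MeasurableSpace Ω] (P : Measure Ω) [IsProbabilityMeasure P]
    (Z : ℕ → Ω → A × ℕ)
    (p : A → ℕ → ℝ≥0∞) (hp : ∀ a, ∑' k, p a k = 1)
    (R : ℕ → (ℕ → A) → A → ℝ≥0∞)
    (hRdep : ∀ (n : ℕ) (a a' : ℕ → A), (∀ i < n, a i = a' i) → R n a = R n a')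
    (hRsum : ∀ (n : ℕ) (a : ℕ → A), ∑' b, R n a b = 1)
    (hZ : ∀ (n : ℕ) (a : ℕ → A) (k : ℕ → ℕ),
      P (⋂ i ∈ Finset.range (n + 1), {ω | Z i ω = (a i, k i)}) =
        (∏ i ∈ Finset.range (n + 1), R i a (a i)) *
          ∏ i ∈ Finset.range (n + 1), p (a i) (k i))
    (n r : ℕ) :
    P {ω | (∑ i ∈ Finset.range n, if Z i ω = Z n ω then 1 else 0 : ℕ) = r} =
      ∫⁻ ω, (((∑ i ∈ Finset.range n, if (Z i ω).1 = (Z n ω).1 then 1 else 0 : ℕ).choose r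
          : ℝ≥0∞)) *
        ∑' k, p (Z n ω).1 k ^ (r + 1) *
          (1 - p (Z n ω).1 k) ^
            ((∑ i ∈ Finset.range n, if (Z i ω).1 = (Z n ω).1 then 1 else 0 : ℕ) - r) ∂P := by
  have : Nonempty A := ⟨(Z 0 (nonempty_of_isProbabilityMeasure P).some).1⟩
  set f : Ω → Fin (n + 1) → A × ℕ := fun ω i => Z i ω
  have hfiber : ∀ c,
      P (f ⁻¹' {c}) = pathWeight R (fun i => (c i).1) * ∏ i, p (c i).1 (c i).2 :=
    measure_preimage_history_eq hZ n
  have htot : ∑' c, P (f ⁻¹' {c}) = P Set.univ := by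
    simp_rw [hfiber, tsum_mul_prod_eq_tsum hp, tsum_pathWeight_eq_one hRdep hRsum,
      measure_univ]
  have hocc : ∀ ω, (∑ i ∈ range n, if Z i ω = Z n ω then 1 else 0) = occupancy (f ω) :=
    fun ω => (occupancy_eq_sum_range (Z · ω) n).symm
  have hocc₁ : ∀ ω, (∑ i ∈ range n, if (Z i ω).1 = (Z n ω).1 then 1 else 0) =
      occupancy fun i => (f ω i).1 :=
    fun ω => (occupancy_eq_sum_range (fun i => (Z i ω).1) n).symm
  simp_rw [hocc, hocc₁]
  calc P (f ⁻¹' {c | occupancy c = r})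
      = ∑' c, {c | occupancy c = r}.indicator (fun c => P (f ⁻¹' {c})) c :=
        measure_preimage_eq_tsum_indicator htot _
    _ = ∑' c, mixedBinomial (p (c (Fin.last n)).1) (occupancy fun i => (c i).1) r *
          P (f ⁻¹' {c}) := by
        simp_rw [hfiber]
        exact tsum_indicator_occupancy_eq_tsum_mixedBinomial_mul hp _ r
    _ = _ := (lintegral_comp_eq_tsum htot _).symm

/-- Lemma 4.2: in the regime switching model, for all `n ≥ 1` and `0 ≤ r ≤ n`,
`P{𝓛_n = r} = E[ binom(L_n, r) Σ_k p_{X_{n+1},k}^{1+r} (1 − p_{X_{n+1},k})^{L_n − r} ]`,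
where the binomial coefficient is `0` when `L_n < r`. (Indexed from 0:
`𝓛_n = Σ_{i<n} 1{Z_i = Z_n}` and `L_n = Σ_{i<n} 1{X_i = X_n}`.) -/
theorem regime_switching_occupancy_repr {A : Type*} [Countable A] [DecidableEq A]
    {Ω : Type*} [MeasurableSpace Ω] (P : Measure Ω) [IsProbabilityMeasure P]
    (Z : ℕ → Ω → A × ℕ)
    (p : A → ℕ → ℝ≥0∞) (hp : ∀ a, ∑' k, p a k = 1)
    (R : ℕ → (ℕ → A) → A → ℝ≥0∞)
    (hRdep : ∀ (n : ℕ) (a a' : ℕ → A), (∀ i < n, a i = a' i) → R n a = R n a')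
    (hRsum : ∀ (n : ℕ) (a : ℕ → A), ∑' b, R n a b = 1)
    (hZ : ∀ (n : ℕ) (a : ℕ → A) (k : ℕ → ℕ),
      P (⋂ i ∈ Finset.range (n + 1), {ω | Z i ω = (a i, k i)}) =
        (∏ i ∈ Finset.range (n + 1), R i a (a i)) *
          ∏ i ∈ Finset.range (n + 1), p (a i) (k i))
    (n r : ℕ) (hn : 1 ≤ n) (hr : r ≤ n) :
    P {ω | (∑ i ∈ Finset.range n, if Z i ω = Z n ω then 1 else 0 : ℕ) = r} =
      ∫⁻ ω, (((∑ i ∈ Finset.range n, if (Z i ω).1 = (Z n ω).1 then 1 else 0 : ℕ).choose r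
          : ℝ≥0∞)) *
        ∑' k, p (Z n ω).1 k ^ (r + 1) *
          (1 - p (Z n ω).1 k) ^
            ((∑ i ∈ Finset.range n, if (Z i ω).1 = (Z n ω).1 then 1 else 0 : ℕ) - r) ∂P :=
  regime_switching_occupancy_repr_general P Z p hp R hRdep hRsum hZ n r
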